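/- arXiv:2101.11717 — 4 statements merged into one kernel-verified Lean document; each statement's English description precedes it below -/
import Mathlib

section
/- (Grid Based Majoring Points.) Let y_min ≤ y_max in ℝ^d, let D ⊆ R_{y_min, y_max}, let N ≥ 1 be an integer, set r = (y_max − y_min)/N, and for each multi-index i ∈ {0,…,N−1}^d set y_i = y_min + (i_1 r_1, …, i_d r_d) and y'_i = y_i + r. Let f : ℝ^d → ℝ be non-decreasing. Then the family (y_i, f(y'_i)) are Majoring Points for f on D: every non-decreasing g : ℝ^d → ℝ with g(y_i) ≥ f(y'_i) for all i ∈ {0,…,N−1}^d satisfies g(x) ≥ f(x) for all x ∈ D. -/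
/-- The hyper-rectangle `R_{y,y'} = {x : y ≤ x and x_k < y'_k for all k}`. -/
def Rect {d : ℕ} (y y' : Fin d → ℝ) : Set (Fin d → ℝ) :=
  {x | y ≤ x ∧ ∀ k, x k < y' k}

/-- Grid Based Majoring Points: with the regular grid of step `r = (y_max - y_min)/N`
covering `D ⊆ R_{y_min,y_max}`, the family `(y_i, f(y'_i))` are Majoring Points for the
non-decreasing function `f` on `D`: every non-decreasing `g` with `g(y_i) ≥ f(y'_i)`
for all multi-indices `i ∈ {0,…,N-1}^d` satisfies `g ≥ f` on `D`. -/
theorem grid_majoring_points {d : ℕ} (N : ℕ) (hN : 1 ≤ N)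
    (ymin ymax : Fin d → ℝ) (hle : ymin ≤ ymax)
    (D : Set (Fin d → ℝ)) (hD : D ⊆ Rect ymin ymax)
    (r : Fin d → ℝ) (hr : r = fun k => (ymax k - ymin k) / N)
    (f : (Fin d → ℝ) → ℝ) (hf : Monotone f)
    (g : (Fin d → ℝ) → ℝ) (hg : Monotone g)
    (hmaj : ∀ i : Fin d → Fin N,
      f (fun k => ymin k + (i k : ℝ) * r k + r k) ≤ g (fun k => ymin k + (i k : ℝ) * r k)) :
    ∀ x ∈ D, f x ≤ g x := by
  intro x hx
  obtain ⟨hxl, hxu⟩ := hD hx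
  have hNpos : (0:ℝ) < N := by positivity
  -- step sizes are positive
  have hrpos : ∀ k, 0 < r k := by
    intro k
    rw [hr]
    have : ymin k < ymax k := lt_of_le_of_lt (hxl k) (hxu k)
    exact div_pos (by linarith) hNpos
  set t : Fin d → ℝ := fun k => (x k - ymin k) / r k with ht
  have ht0 : ∀ k, 0 ≤ t k := fun k =>
    div_nonneg (by linarith [hxl k]) (hrpos k).le
  have htN : ∀ k, t k < N := by
    intro k
    rw [ht]
    rw [div_lt_iff₀ (hrpos k), hr]
    have hxk := hxu k
    field_simp
    linarith
  have hfloor : ∀ k, ⌊t k⌋₊ < N := fun k =>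
    Nat.floor_lt (ht0 k) |>.mpr (by exact_mod_cast htN k)
  set i : Fin d → Fin N := fun k => ⟨⌊t k⌋₊, hfloor k⟩ with hi
  have h1 : (fun k => ymin k + (i k : ℝ) * r k) ≤ x := by
    intro k
    have hle' : (⌊t k⌋₊ : ℝ) ≤ (x k - ymin k) / r k := Nat.floor_le (ht0 k)
    have := (le_div_iff₀ (hrpos k)).mp hle'
    simp only [hi]
    linarith
  have h2 : x ≤ (fun k => ymin k + (i k : ℝ) * r k + r k) := by
    intro k
    have hlt : (x k - ymin k) / r k < (⌊t k⌋₊ : ℝ) + 1 := Nat.lt_floor_add_one (t k)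
    have := (div_lt_iff₀ (hrpos k)).mp hlt
    simp only [hi]
    nlinarith
  calc f x ≤ f (fun k => ymin k + (i k : ℝ) * r k + r k) := hf h2
    _ ≤ g (fun k => ymin k + (i k : ℝ) * r k) := hmaj i
    _ ≤ g x := hg h1
end

section
/- (Grid Based Majoring Points from a dataset.) Let D ⊆ ℝ^d, let f : ℝ^d → ℝ be non-decreasing, let x_1, …, x_n ∈ ℝ^d, and for x with {j : x ≤ x_j} nonempty define f̃(x) = min_{j : x ≤ x_j} f(x_j). Let C = (y_i, y'_i)_{i=1..m} be a cover of D such that for each i the set {j : y'_i ≤ x_j} is nonempty. Then every non-decreasing g : ℝ^d → ℝ with g(y_i) ≥ f̃(y'_i) for all i = 1..m satisfies g(x) ≥ f(x) for all x ∈ D. -/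
open scoped Classical

/-- Grid Based Majoring Points from a dataset: let `f̃(x) = min_{j : x ≤ x_j} f(x_j)`
be the empirical majorant built from the data points `x_1,…,x_n`. If `C = (y_i,y'_i)`
covers `D`, each set `{j : y'_i ≤ x_j}` is nonempty, and a non-decreasing `g` satisfies
`g(y_i) ≥ f̃(y'_i)` for all `i`, then `g ≥ f` on `D` (for `f` non-decreasing). -/
theorem dataset_majoring_points {d n m : ℕ} (D : Set (Fin d → ℝ))
    (f : (Fin d → ℝ) → ℝ) (hf : Monotone f)
    (xs : Fin n → (Fin d → ℝ))
    (y y' : Fin m → (Fin d → ℝ)) (hyy' : ∀ i, y i ≤ y' i)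
    (hcover : D ⊆ ⋃ i, Rect (y i) (y' i))
    (hne : ∀ i, (Finset.univ.filter (fun j => y' i ≤ xs j)).Nonempty)
    (g : (Fin d → ℝ) → ℝ) (hg : Monotone g)
    (hmaj : ∀ i,
      (Finset.univ.filter (fun j => y' i ≤ xs j)).inf' (hne i) (fun j => f (xs j)) ≤
        g (y i)) :
    ∀ x ∈ D, f x ≤ g x := by
  intro x hx
  obtain ⟨_, ⟨i, rfl⟩, hxi⟩ := hcover hx
  obtain ⟨hyx, hxy'⟩ := hxi
  have h1 : f x ≤ (Finset.univ.filter (fun j => y' i ≤ xs j)).inf' (hne i)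
      (fun j => f (xs j)) := by
    apply Finset.le_inf'
    intro j hj
    have hj' : y' i ≤ xs j := (Finset.mem_filter.mp hj).2
    exact hf (fun k => (hxy' k).le.trans (hj' k))
  exact h1.trans ((hmaj i).trans (hg hyx))
end

section
/- (Guaranteed overestimation of the samples.) Let m ≥ 1, let a_1, …, a_m ∈ ℝ^d and b_1, …, b_m ∈ ℝ, let β > 0, α⁺ ≥ 0, α⁻ > 0, and let p ≥ 1 be an integer. Define the asymmetric loss l(t) = α⁺ (t − β)² if t ≥ β and l(t) = α⁻ |t − β|^p if t < β, and for g : ℝ^d → ℝ define E(g) = Σ_{i=1}^m l(g(a_i) − b_i). Let S be any set of functions ℝ^d → ℝ, and suppose: (i) there exist η > 0 with m · max(α⁻ η^p, α⁺ η²) ≤ α⁻ β^p and a function g' ∈ S with |g'(a_i) − (b_i + β)| ≤ η for all i = 1..m; (ii) g* ∈ S minimizes E over S, i.e. E(g*) ≤ E(g) for all g ∈ S. Then g*(a_i) ≥ b_i for all i = 1..m. -/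
/-- Guaranteed overestimation of the samples (Proposition): let `E(g) = ∑ᵢ l(g(aᵢ) - bᵢ)`
with the asymmetric loss `l(t) = α⁺ (t-β)²` if `t ≥ β`, `l(t) = α⁻ |t-β|^p` if `t < β`,
where `β > 0`, `α⁺ ≥ 0`, `α⁻ > 0`, `p ≥ 1` and `m ≥ 1`. If (i) there is `η > 0` with
`m · max(α⁻ η^p, α⁺ η²) ≤ α⁻ β^p` and some `g' ∈ S` with `|g'(aᵢ) - (bᵢ + β)| ≤ η`
for all `i`, and (ii) `g* ∈ S` minimizes `E` over `S`, then `g*(aᵢ) ≥ bᵢ` for all `i`. -/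
theorem guaranteed_overestimation_of_samples {d m : ℕ} (hm : 1 ≤ m)
    (a : Fin m → (Fin d → ℝ)) (b : Fin m → ℝ)
    (β αp αm : ℝ) (p : ℕ)
    (hβ : 0 < β) (hαp : 0 ≤ αp) (hαm : 0 < αm) (hp : 1 ≤ p)
    (l : ℝ → ℝ)
    (hl : l = fun t => if β ≤ t then αp * (t - β) ^ 2 else αm * |t - β| ^ p)
    (E : (((Fin d → ℝ) → ℝ)) → ℝ)
    (hE : E = fun g => ∑ i, l (g (a i) - b i))
    (S : Set ((Fin d → ℝ) → ℝ))
    (η : ℝ) (hη : 0 < η)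
    (hηsmall : (m : ℝ) * max (αm * η ^ p) (αp * η ^ 2) ≤ αm * β ^ p)
    (g' : (Fin d → ℝ) → ℝ) (hg'S : g' ∈ S)
    (hg'approx : ∀ i, |g' (a i) - (b i + β)| ≤ η)
    (gstar : (Fin d → ℝ) → ℝ) (hgstarS : gstar ∈ S)
    (hmin : ∀ g ∈ S, E gstar ≤ E g) :
    ∀ i, b i ≤ gstar (a i) := by
  subst hl hE
  -- loss is nonnegative
  have hlnn : ∀ t : ℝ, 0 ≤ (if β ≤ t then αp * (t - β) ^ 2 else αm * |t - β| ^ p) := by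
    intro t
    split
    · positivity
    · positivity
  intro i
  by_contra hlt
  push_neg at hlt
  -- loss at i-th term of gstar is > αm * β^p
  set t := gstar (a i) - b i with ht
  have htneg : t < 0 := by simp [ht]; linarith
  have hnotle : ¬ β ≤ t := by linarith
  have habs : |t - β| = β - t := by
    rw [abs_of_neg (by linarith)]; ring
  have hstrict : αm * β ^ p < αm * |t - β| ^ p := by
    apply mul_lt_mul_of_pos_left _ hαm
    rw [habs]
    exact pow_lt_pow_left₀ (by linarith) hβ.le (by omega)
  have hterm : αm * β ^ p < (if β ≤ t then αp * (t - β) ^ 2 else αm * |t - β| ^ p) := by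
    rw [if_neg hnotle]; exact hstrict
  -- E gstar ≥ i-th term
  have hEstar : αm * β ^ p <
      ∑ j, (if β ≤ gstar (a j) - b j then αp * (gstar (a j) - b j - β) ^ 2
        else αm * |gstar (a j) - b j - β| ^ p) := by
    have h2 : (if β ≤ t then αp * (t - β) ^ 2 else αm * |t - β| ^ p) ≤
        ∑ j, (if β ≤ gstar (a j) - b j then αp * (gstar (a j) - b j - β) ^ 2
          else αm * |gstar (a j) - b j - β| ^ p) :=
      Finset.single_le_sum (f := fun j => if β ≤ gstar (a j) - b j then αp * (gstar (a j) - b j - β) ^ 2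
          else αm * |gstar (a j) - b j - β| ^ p) (fun j _ => hlnn _) (Finset.mem_univ i)
    linarith
  -- E g' ≤ m * max ≤ αm * β^p
  have hEg' : (∑ j, (if β ≤ g' (a j) - b j then αp * (g' (a j) - b j - β) ^ 2
        else αm * |g' (a j) - b j - β| ^ p)) ≤ αm * β ^ p := by
    refine le_trans ?_ hηsmall
    have : ∀ j ∈ Finset.univ, (if β ≤ g' (a j) - b j then αp * (g' (a j) - b j - β) ^ 2
        else αm * |g' (a j) - b j - β| ^ p) ≤ max (αm * η ^ p) (αp * η ^ 2) := by
      intro j _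
      have hj := hg'approx j
      have habsj : |g' (a j) - b j - β| ≤ η := by
        have : g' (a j) - b j - β = g' (a j) - (b j + β) := by ring
        rw [this]; exact hj
      split
      · refine le_trans ?_ (le_max_right _ _)
        apply mul_le_mul_of_nonneg_left _ hαp
        calc (g' (a j) - b j - β) ^ 2 ≤ |g' (a j) - b j - β| ^ 2 := by
              rw [sq_abs]
        _ ≤ η ^ 2 := pow_le_pow_left₀ (abs_nonneg _) habsj 2
      · refine le_trans ?_ (le_max_left _ _)
        apply mul_le_mul_of_nonneg_left _ hαm.le
        exact pow_le_pow_left₀ (abs_nonneg _) habsj p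
    calc _ ≤ ∑ _j : Fin m, max (αm * η ^ p) (αp * η ^ 2) := Finset.sum_le_sum this
    _ = (m : ℝ) * max (αm * η ^ p) (αp * η ^ 2) := by
        rw [Finset.sum_const, Finset.card_univ, Fintype.card_fin, nsmul_eq_mul]
  have := hmin g' hg'S
  simp only at this
  linarith
end

section
/- (Overestimation guarantee of the monotone surrogate network.) Let D ⊆ ℝ^d, let f : ℝ^d → ℝ be non-decreasing, and let C = (y_i, y'_i)_{i=1..m} be a cover of D. Let σ : ℝ → ℝ be non-decreasing, L ≥ 1, n_0 = d, n_1, …, n_{L−1} positive integers, n_L = 1, W_k an n_k × n_{k−1} matrix with non-negative entries and b_k ∈ ℝ^{n_k} for k = 1..L, and let h : ℝ^d → ℝ be the network function defined by h_0(x) = x, h_k(x) = σ componentwise of (W_k h_{k−1}(x) + b_k) for k = 1..L−1, and h(x) = W_L h_{L−1}(x) + b_L. If h(y_i) ≥ f(y'_i) for all i = 1..m, then h(x) ≥ f(x) for all x ∈ D. -/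
/-- The hidden part of a feed-forward network: `netHidden σ n W b k` is the map
`h_k`, where `h_0(x) = x` and `h_{k+1}(x) = σ.(W_k · h_k(x) + b_k)` (componentwise). -/
noncomputable def netHidden (σ : ℝ → ℝ) (n : ℕ → ℕ)
    (W : ∀ k : ℕ, Matrix (Fin (n (k + 1))) (Fin (n k)) ℝ)
    (b : ∀ k : ℕ, Fin (n (k + 1)) → ℝ) :
    (k : ℕ) → (Fin (n 0) → ℝ) → (Fin (n k) → ℝ)
  | 0 => fun x => x
  | k + 1 => fun x j => σ ((W k).mulVec (netHidden σ n W b k x) j + b k j)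

lemma netHidden_mono (σ : ℝ → ℝ) (hσ : Monotone σ) (n : ℕ → ℕ)
    (W : ∀ k : ℕ, Matrix (Fin (n (k + 1))) (Fin (n k)) ℝ)
    (b : ∀ k : ℕ, Fin (n (k + 1)) → ℝ) (Lh : ℕ)
    (hW : ∀ k < Lh, ∀ i j, 0 ≤ W k i j)
    (k : ℕ) (hk : k ≤ Lh) {x x' : Fin (n 0) → ℝ} (hx : x ≤ x') :
    netHidden σ n W b k x ≤ netHidden σ n W b k x' := by
  induction k with
  | zero => exact hx
  | succ k ih =>
    intro j
    simp only [netHidden]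
    apply hσ
    have hle := ih (le_of_lt (Nat.lt_of_succ_le hk))
    have : (W k).mulVec (netHidden σ n W b k x) j ≤
        (W k).mulVec (netHidden σ n W b k x') j := by
      unfold Matrix.mulVec dotProduct
      exact Finset.sum_le_sum fun i _ =>
        mul_le_mul_of_nonneg_left (hle i) (hW k (Nat.lt_of_succ_le hk) j i)
    linarith

/-- Overestimation guarantee of the monotone surrogate network: let `f` be
non-decreasing on `ℝ^d` (here `d = n 0`), let `C = (y_i, y'_i)` be a cover of `D`, and
let `h` be the scalar-valued network of depth `L = Lh + 1` with non-decreasing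
activation `σ`, non-negative weight matrices `W_1,…,W_{L-1}`, and a final affine layer
with non-negative weight vector `wOut` (of width `n_L = 1`) and bias `bOut`.
If `h(y_i) ≥ f(y'_i)` for all `i`, then `h(x) ≥ f(x)` for all `x ∈ D`. -/
theorem monotone_network_overestimates {m : ℕ}
    (σ : ℝ → ℝ) (hσ : Monotone σ)
    (n : ℕ → ℕ) (Lh : ℕ) (hn : ∀ k ≤ Lh, 0 < n k)
    (W : ∀ k : ℕ, Matrix (Fin (n (k + 1))) (Fin (n k)) ℝ)
    (b : ∀ k : ℕ, Fin (n (k + 1)) → ℝ)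
    (wOut : Fin (n Lh) → ℝ) (bOut : ℝ)
    (hW : ∀ k < Lh, ∀ i j, 0 ≤ W k i j) (hwOut : ∀ j, 0 ≤ wOut j)
    (D : Set (Fin (n 0) → ℝ))
    (f : (Fin (n 0) → ℝ) → ℝ) (hf : Monotone f)
    (y y' : Fin m → (Fin (n 0) → ℝ)) (hyy' : ∀ i, y i ≤ y' i)
    (hcover : D ⊆ ⋃ i, Rect (y i) (y' i))
    (hmaj : ∀ i, f (y' i) ≤ ∑ j, wOut j * netHidden σ n W b Lh (y i) j + bOut) :
    ∀ x ∈ D, f x ≤ ∑ j, wOut j * netHidden σ n W b Lh x j + bOut := by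
  intro x hx
  obtain ⟨i, hxi⟩ := Set.mem_iUnion.1 (hcover hx)
  obtain ⟨hyx, hxy'⟩ := hxi
  have h1 : f x ≤ f (y' i) := hf fun k => (hxy' k).le
  have h2 := hmaj i
  have h3 : ∑ j, wOut j * netHidden σ n W b Lh (y i) j ≤
      ∑ j, wOut j * netHidden σ n W b Lh x j :=
    Finset.sum_le_sum fun j _ => mul_le_mul_of_nonneg_left
      (netHidden_mono σ hσ n W b Lh hW Lh le_rfl hyx j) (hwOut j)
  linarith
end
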